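/- arXiv:1609.00926 — 3 statements merged into one kernel-verified Lean document; each statement's English description precedes it below -/
import Mathlib

section
/- If β·(−λ₋) + Φ_H(−λ₋) < b < β·λ₊ + Φ_H(λ₊), then the equation βu + Φ_H(u) = b has a unique solution u₊ in the interval [−λ₋, λ₊]. -/
/-- if β(−λ₋) + Φ_H(−λ₋) < b < βλ₊ + Φ_H(λ₊), then βu + Φ_H(u) = b
has a unique solution u₊ in [−λ₋, λ₊]. -/
theorem unique_solution_strip (α lp lm β b : ℝ) (hα : α ∈ Set.Ioo (0:ℝ) 2) (hα1 : α ≠ 1)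
    (hlp : 0 < lp) (hlm : 0 < lm) (hb : 0 < b)
    (PhiH : ℝ → ℝ)
    (hPhiH : PhiH = fun u =>
      ((lp - u) ^ α - lp ^ α + (lm + u) ^ α - lm ^ α) /
        (α * (α - 1) * (lp ^ (α - 2) + lm ^ (α - 2))) +
      u * (lp ^ (α - 1) - lm ^ (α - 1)) / ((α - 1) * (lp ^ (α - 2) + lm ^ (α - 2))))
    (hlow : β * (-lm) + PhiH (-lm) < b) (hhigh : b < β * lp + PhiH lp) :
    ∃! u, u ∈ Set.Icc (-lm) lp ∧ β * u + PhiH u = b := by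
  obtain ⟨hα0, hα2⟩ := hα
  set S := lp ^ (α - 2) + lm ^ (α - 2) with hS
  have hSpos : 0 < S := by positivity
  set D := α * (α - 1) * S with hD
  have hDne : D ≠ 0 := by
    have : α - 1 ≠ 0 := sub_ne_zero.mpr hα1
    simp [hD]; push_neg
    exact ⟨⟨ne_of_gt hα0, this⟩ , ne_of_gt hSpos⟩
  set g : ℝ → ℝ := fun u => β * u + PhiH u with hg
  -- convexity of g on [-lm, lp]
  have hF : ∀ x ∈ Set.Icc (-lm) lp, ∀ y ∈ Set.Icc (-lm) lp, ∀ a c : ℝ,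
      0 ≤ a → 0 ≤ c → a + c = 1 →
      ((lp - (a*x + c*y)) ^ α + (lm + (a*x + c*y)) ^ α) / D ≤
      (a * ((lp - x) ^ α + (lm + x) ^ α) + c * ((lp - y) ^ α + (lm + y) ^ α)) / D := by
    intro x hx y hy a c ha hc hac
    have hc1 : c = 1 - a := by linarith
    subst hc1
    have hx1 : (lp - x) ∈ Set.Ici (0:ℝ) := by simp; linarith [hx.2]
    have hx2 : (lm + x) ∈ Set.Ici (0:ℝ) := by simp; linarith [hx.1]
    have hy1 : (lp - y) ∈ Set.Ici (0:ℝ) := by simp; linarith [hy.2]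
    have hy2 : (lm + y) ∈ Set.Ici (0:ℝ) := by simp; linarith [hy.1]
    have e1 : lp - (a*x + (1-a)*y) = a * (lp - x) + (1-a) * (lp - y) := by ring
    have e2 : lm + (a*x + (1-a)*y) = a * (lm + x) + (1-a) * (lm + y) := by ring
    rw [e1, e2]
    rcases lt_or_gt_of_ne hα1 with h1 | h1
    · -- α < 1 : concave, D < 0
      have hDneg : D < 0 := by
        have : α * (α - 1) < 0 := mul_neg_of_pos_of_neg hα0 (by linarith)
        exact mul_neg_of_neg_of_pos this hSpos
      rw [div_le_div_right_of_neg hDneg]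
      have cc := Real.concaveOn_rpow hα0.le h1.le
      have k1 := cc.2 hx1 hy1 ha hc hac
      have k2 := cc.2 hx2 hy2 ha hc hac
      simp only [smul_eq_mul] at k1 k2
      linarith
    · -- α > 1 : convex, D > 0
      have hDpos : 0 < D := by
        have : 0 < α * (α - 1) := mul_pos hα0 (by linarith)
        exact mul_pos this hSpos
      rw [div_le_div_iff_of_pos_right hDpos]
      have cc := convexOn_rpow h1.le
      have k1 := cc.2 hx1 hy1 ha hc hac
      have k2 := cc.2 hx2 hy2 ha hc hac
      simp only [smul_eq_mul] at k1 k2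
      linarith
  have hconv : ConvexOn ℝ (Set.Icc (-lm) lp) g := by
    refine ⟨convex_Icc _ _, fun x hx y hy a c ha hc hac => ?_⟩
    have key := hF x hx y hy a c ha hc hac
    have hc1 : c = 1 - a := by linarith
    subst hc1
    simp only [hg, hPhiH, smul_eq_mul]
    have expand : ∀ u : ℝ,
        β * u + (((lp - u) ^ α - lp ^ α + (lm + u) ^ α - lm ^ α) / D +
          u * (lp ^ (α-1) - lm ^ (α-1)) / ((α - 1) * S)) =
        ((lp - u) ^ α + (lm + u) ^ α) / D + (β + (lp ^ (α-1) - lm ^ (α-1)) / ((α-1)*S)) * u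
          + (-(lp ^ α) - lm ^ α) / D := by
      intro u
      have hE : (α - 1) * S ≠ 0 := mul_ne_zero (sub_ne_zero.mpr hα1) (ne_of_gt hSpos)
      field_simp
      ring
    rw [expand, expand, expand]
    set L := β + (lp ^ (α-1) - lm ^ (α-1)) / ((α-1)*S) with hL
    set K := (-(lp ^ α) - lm ^ α) / D with hK
    have heq : a * (((lp - x) ^ α + (lm + x) ^ α) / D + L * x + K)
        + (1 - a) * (((lp - y) ^ α + (lm + y) ^ α) / D + L * y + K)
        = (a * ((lp - x) ^ α + (lm + x) ^ α) + (1 - a) * ((lp - y) ^ α + (lm + y) ^ α)) / D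
          + L * (a * x + (1 - a) * y) + K := by
      field_simp
      ring
    rw [heq]
    linarith [key]
  -- continuity
  have hcont : Continuous g := by
    rw [hg, hPhiH]
    have c1 : Continuous fun u : ℝ => (lp - u) ^ α :=
      Continuous.rpow_const (continuous_const.sub continuous_id) (fun x => Or.inr hα0.le)
    have c2 : Continuous fun u : ℝ => (lm + u) ^ α :=
      Continuous.rpow_const (continuous_const.add continuous_id) (fun x => Or.inr hα0.le)
    refine (continuous_const.mul continuous_id).add (Continuous.add ?_ ?_)
    · exact (((c1.sub continuous_const).add c2).sub continuous_const).div_const _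
    · exact (continuous_id.mul continuous_const).div_const _
  -- existence via IVT
  have hle : -lm ≤ lp := by linarith
  have hmem : b ∈ Set.Icc (g (-lm)) (g lp) := ⟨hlow.le, hhigh.le⟩
  obtain ⟨u, hu, hgu⟩ := intermediate_value_Icc hle hcont.continuousOn hmem
  -- uniqueness
  have uniq : ∀ x1 ∈ Set.Icc (-lm) lp, ∀ x2 ∈ Set.Icc (-lm) lp,
      g x1 = b → g x2 = b → x1 ≤ x2 → x1 = x2 := by
    intro x1 hx1 x2 hx2 h1 h2 hle12
    by_contra hne
    have hlt : x1 < x2 := lt_of_le_of_ne hle12 hne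
    rcases eq_or_lt_of_le hx1.1 with he | he
    · exact absurd (he ▸ h1) (by simpa [hg] using ne_of_lt hlow)
    · -- -lm < x1 < x2
      set t : ℝ := (x2 - x1) / (x2 + lm) with ht
      have hden : 0 < x2 + lm := by linarith [hx2.1]
      have ht0 : 0 < t := div_pos (by linarith) hden
      have ht1 : t < 1 := (div_lt_one hden).mpr (by linarith)
      have hden' : x2 + lm ≠ 0 := ne_of_gt hden
      have hpt : t • (-lm) + (1 - t) • x2 = x1 := by
        simp only [smul_eq_mul, ht]
        field_simp
        ring
      have := hconv.2 (Set.left_mem_Icc.mpr hle) hx2 ht0.le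
        (show (0:ℝ) ≤ 1 - t by linarith) (show t + (1 - t) = 1 by ring)
      rw [hpt, h1] at this
      simp only [smul_eq_mul, h2] at this
      have hglm : g (-lm) < b := hlow
      nlinarith
  refine ⟨u, ⟨hu, hgu⟩, fun v ⟨hv, hgv⟩ => ?_⟩
  rcases le_total v u with h | h
  · exact (uniq v hv u hu hgv hgu h)
  · exact (uniq u hu v hv hgu hgv h).symm
end

section
/- For α ∈ (0,1), the first derivative of the CTS moment generating function satisfies M'_{CTS}(λ₊ − s) ~ C·s^{−(1−α)} as s → 0⁺, where C = M_{CTS}(λ₊)/((1−α)(λ₊^{α−2}+λ₋^{α−2})) > 0; i.e., lim_{s→0⁺} s^{1−α}·M'_{CTS}(λ₊ − s) = C. -/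
/-!
At `u = λ₊ - s` the term of `Φ_H'` coming from `(λ₊ - u) ^ α` equals `s ^ (α - 1) / ((1 - α) D)`,
with `D = λ₊ ^ (α - 2) + λ₋ ^ (α - 2)`, while the remaining terms stay bounded as `s → 0⁺`.
Hence `s ^ (1 - α) M'(λ₊ - s) = M(λ₊ - s) (1 / ((1 - α) D) + O(s ^ (1 - α)))`, and `M` is
continuous at `λ₊` because `α > 0`.
-/

open Filter Topology Real

/-- `Φ_H`, with its normalising constant `λ₊ ^ (α - 2) + λ₋ ^ (α - 2)` abstracted to `D`. -/
noncomputable def ctsCumulant (α lp lm D u : ℝ) : ℝ :=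
  ((lp - u) ^ α - lp ^ α + (lm + u) ^ α - lm ^ α) / (α * (α - 1) * D) +
    u * (lp ^ (α - 1) - lm ^ (α - 1)) / ((α - 1) * D)

theorem tendsto_rpow_one_sub_mul_rpow_sub_one_add {p k b : ℝ} {g : ℝ → ℝ} (hp : p < 1)
    (hg : Tendsto g (𝓝[>] 0) (𝓝 b)) :
    Tendsto (fun s => s ^ (1 - p) * (k * s ^ (p - 1) + g s)) (𝓝[>] 0) (𝓝 k) := by
  have hpow : Tendsto (fun s : ℝ => s ^ (1 - p)) (𝓝[>] 0) (𝓝 0) := by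
    have h := (continuousAt_rpow_const 0 (1 - p) (Or.inr (by linarith))).tendsto
    rw [zero_rpow (by linarith)] at h
    exact tendsto_nhdsWithin_of_tendsto_nhds h
  have hsimp : (fun s => k + s ^ (1 - p) * g s) =ᶠ[𝓝[>] 0]
      fun s => s ^ (1 - p) * (k * s ^ (p - 1) + g s) := by
    filter_upwards [self_mem_nhdsWithin] with s (hs : 0 < s)
    have hinv : s ^ (1 - p) * s ^ (p - 1) = 1 := by rw [← rpow_add hs]; simp
    linear_combination (-k) * hinv
  simpa using (tendsto_const_nhds.add (hpow.mul hg)).congr' hsimp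

section

variable {α lp lm D : ℝ}

theorem continuous_ctsCumulant (hα : 0 ≤ α) : Continuous (ctsCumulant α lp lm D) := by
  unfold ctsCumulant
  have := continuous_rpow_const hα
  fun_prop

theorem hasDerivAt_ctsCumulant {u : ℝ} (hp : lp - u ≠ 0) (hm : lm + u ≠ 0) :
    HasDerivAt (ctsCumulant α lp lm D)
      ((-(α * (lp - u) ^ (α - 1)) + α * (lm + u) ^ (α - 1)) / (α * (α - 1) * D) +
        (lp ^ (α - 1) - lm ^ (α - 1)) / ((α - 1) * D)) u := by
  have hp' : HasDerivAt (fun u => (lp - u) ^ α) (-(α * (lp - u) ^ (α - 1))) u := by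
    simpa using ((hasDerivAt_id u).const_sub lp).rpow_const (p := α) (Or.inl hp)
  have hm' : HasDerivAt (fun u => (lm + u) ^ α) (α * (lm + u) ^ (α - 1)) u := by
    simpa using ((hasDerivAt_id u).const_add lm).rpow_const (p := α) (Or.inl hm)
  have h := ((((hp'.sub_const (lp ^ α)).add hm').sub_const (lm ^ α)).div_const
    (α * (α - 1) * D)).add (((hasDerivAt_id u).mul_const
      (lp ^ (α - 1) - lm ^ (α - 1))).div_const ((α - 1) * D))
  rw [one_mul] at h
  exact h

theorem deriv_exp_ctsCumulant_sub (hα : α ≠ 0) {s : ℝ} (hs : s ≠ 0) (hm : lm + lp - s ≠ 0) :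
    deriv (fun u => exp (ctsCumulant α lp lm D u)) (lp - s) =
      exp (ctsCumulant α lp lm D (lp - s)) * (((1 - α) * D)⁻¹ * s ^ (α - 1) +
        ((lm + lp - s) ^ (α - 1) + lp ^ (α - 1) - lm ^ (α - 1)) / ((α - 1) * D)) := by
  have h := (hasDerivAt_ctsCumulant (α := α) (lp := lp) (lm := lm) (D := D) (u := lp - s)
    (by rwa [sub_sub_cancel]) (by rwa [← add_sub_assoc])).exp
  rw [h.deriv, sub_sub_cancel]
  congr 1
  have hcancel : ∀ a b : ℝ, (-(α * a) + α * b) / (α * (α - 1) * D) = (b - a) / ((α - 1) * D) :=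
    fun a b => by
      rw [show -(α * a) + α * b = α * (b - a) by ring, mul_assoc, mul_div_mul_left _ _ hα]
  rw [hcancel, ← add_sub_assoc, show (1 - α) * D = -((α - 1) * D) by ring, inv_neg]
  ring

end

/-- for α ∈ (0,1), M'_{CTS}(λ₊ − s) ~ C·s^{−(1−α)} as s → 0⁺ with
C = M_{CTS}(λ₊)/((1−α)(λ₊^{α−2}+λ₋^{α−2})) > 0, i.e.
lim_{s→0⁺} s^{1−α}·M'_{CTS}(λ₊ − s) = C. -/
theorem mgfCTS_first_deriv_tail (α lp lm : ℝ) (hα : α ∈ Set.Ioo (0:ℝ) 1)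
    (hlp : 0 < lp) (hlm : 0 < lm)
    (PhiH : ℝ → ℝ)
    (hPhiH : PhiH = fun u =>
      ((lp - u) ^ α - lp ^ α + (lm + u) ^ α - lm ^ α) /
        (α * (α - 1) * (lp ^ (α - 2) + lm ^ (α - 2))) +
      u * (lp ^ (α - 1) - lm ^ (α - 1)) / ((α - 1) * (lp ^ (α - 2) + lm ^ (α - 2))))
    (M : ℝ → ℝ) (hM : M = fun u => Real.exp (PhiH u)) :
    0 < M lp / ((1 - α) * (lp ^ (α - 2) + lm ^ (α - 2))) ∧
    Tendsto (fun s : ℝ => s ^ (1 - α) * deriv M (lp - s)) (𝓝[>] 0)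
      (𝓝 (M lp / ((1 - α) * (lp ^ (α - 2) + lm ^ (α - 2))))) := by
  obtain ⟨hα0, hα1⟩ := hα
  obtain rfl : PhiH = ctsCumulant α lp lm (lp ^ (α - 2) + lm ^ (α - 2)) := hPhiH
  subst hM
  set D := lp ^ (α - 2) + lm ^ (α - 2)
  set Φ := ctsCumulant α lp lm D
  refine ⟨div_pos (exp_pos _) (mul_pos (sub_pos.2 hα1) (by positivity)), ?_⟩
  have hexp : Tendsto (fun s => exp (Φ (lp - s))) (𝓝[>] 0) (𝓝 (exp (Φ lp))) := by
    have hcont : Continuous fun s => exp (Φ (lp - s)) :=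
      continuous_exp.comp ((continuous_ctsCumulant hα0.le).comp (continuous_sub_left lp))
    simpa using (hcont.tendsto 0).mono_left nhdsWithin_le_nhds
  have hreg : ContinuousAt
      (fun s : ℝ => ((lm + lp - s) ^ (α - 1) + lp ^ (α - 1) - lm ^ (α - 1)) / ((α - 1) * D)) 0 := by
    have : ContinuousAt (fun s : ℝ => (lm + lp - s) ^ (α - 1)) 0 :=
      (continuousAt_const.sub continuousAt_id).rpow_const (Or.inl (by simp; linarith))
    fun_prop
  have hsing := tendsto_rpow_one_sub_mul_rpow_sub_one_add (k := ((1 - α) * D)⁻¹) hα1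
    (hreg.tendsto.mono_left nhdsWithin_le_nhds)
  rw [div_eq_mul_inv]
  refine (hexp.mul hsing).congr' ?_
  filter_upwards [Ioo_mem_nhdsGT hlp] with s ⟨hs0, hslp⟩
  rw [deriv_exp_ctsCumulant_sub hα0.ne' hs0.ne' (by linarith : 0 < lm + lp - s).ne']
  ring
end

section
/- For α ∈ [1,2) with α ≠ 1 (or taking appropriate limits for α = 1), the second derivative of the CTS moment generating function satisfies lim_{s→0⁺} s^{2−α}·M''_{CTS}(λ₊ − s) = M_{CTS}(λ₊)/(λ₊^{α−2}+λ₋^{α−2}). -/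
/-!
`M'' = M (Φ'² + Φ'')` on `(-λ₋, λ₊)`. As `u → λ₊` only the summand `(λ₊ - u)^{α-2} / D` of `Φ''`
blows up (`D = λ₊^{α-2} + λ₋^{α-2}`), and at `u = λ₊ - s` the factor `s^{2-α}` turns it into exactly
`1 / D`. Since `α > 1`, `Φ'` and the other summand of `Φ''` stay bounded near `λ₊`, so they vanish
against `s^{2-α} → 0`, while `M(λ₊ - s) → M(λ₊)`.
-/

open Filter Topology Set

theorem deriv_deriv_exp_comp {f f' : ℝ → ℝ} {f'' u : ℝ}
    (hf : ∀ᶠ x in 𝓝 u, HasDerivAt f (f' x) x) (hf' : HasDerivAt f' f'' u) :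
    deriv (deriv fun x => Real.exp (f x)) u = Real.exp (f u) * (f' u ^ 2 + f'') := by
  have hderiv : deriv (fun x => Real.exp (f x)) =ᶠ[𝓝 u] fun x => Real.exp (f x) * f' x :=
    hf.mono fun x hx => hx.exp.deriv
  have hderiv' : HasDerivAt (fun x => Real.exp (f x) * f' x)
      (Real.exp (f u) * f' u * f' u + Real.exp (f u) * f'') u :=
    hf.self_of_nhds.exp.mul hf'
  rw [hderiv.deriv_eq, hderiv'.deriv]
  ring

theorem tendsto_rpow_nhdsGT_zero {y : ℝ} (hy : 0 < y) :
    Tendsto (fun s : ℝ => s ^ y) (𝓝[>] 0) (𝓝 0) := by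
  have h := (Real.continuousAt_rpow_const 0 y (.inr hy.le)).tendsto
  rw [Real.zero_rpow hy.ne'] at h
  exact h.mono_left nhdsWithin_le_nhds

theorem tendsto_const_sub_nhdsGT_zero (a : ℝ) :
    Tendsto (fun s : ℝ => a - s) (𝓝[>] 0) (𝓝 a) := by
  simpa using ((continuous_sub_left a).tendsto 0).mono_left nhdsWithin_le_nhds

namespace CTS

variable (α lp lm : ℝ)

/-- The standardized CTS cumulant generating function `Φ_H`, with `lp = λ₊` and `lm = λ₋`. -/
noncomputable def cgf (u : ℝ) : ℝ :=
  ((lp - u) ^ α - lp ^ α + (lm + u) ^ α - lm ^ α) /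
      (α * (α - 1) * (lp ^ (α - 2) + lm ^ (α - 2))) +
    u * (lp ^ (α - 1) - lm ^ (α - 1)) / ((α - 1) * (lp ^ (α - 2) + lm ^ (α - 2)))

noncomputable def cgfDeriv (u : ℝ) : ℝ :=
  ((lm + u) ^ (α - 1) - (lp - u) ^ (α - 1) + (lp ^ (α - 1) - lm ^ (α - 1))) /
    ((α - 1) * (lp ^ (α - 2) + lm ^ (α - 2)))

noncomputable def cgfDeriv2 (u : ℝ) : ℝ :=
  ((lp - u) ^ (α - 2) + (lm + u) ^ (α - 2)) / (lp ^ (α - 2) + lm ^ (α - 2))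

variable {α lp lm}

theorem hasDerivAt_cgf (hα : 1 < α) (u : ℝ) :
    HasDerivAt (cgf α lp lm) (cgfDeriv α lp lm u) u := by
  have h₁ := ((hasDerivAt_id' u).const_sub lp).rpow_const (p := α) (.inr hα.le)
  have h₂ := ((hasDerivAt_id' u).const_add lm).rpow_const (p := α) (.inr hα.le)
  refine (((((h₁.sub_const _).add h₂).sub_const _).div_const _).add
    (((hasDerivAt_id' u).mul_const _).div_const _)).congr_deriv ?_
  have : α ≠ 0 := by positivity
  rw [cgfDeriv]
  field_simp
  ring

theorem continuousAt_cgfDeriv (hα : 1 ≤ α) (u : ℝ) : ContinuousAt (cgfDeriv α lp lm) u := by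
  have hα' : 0 ≤ α - 1 := by linarith
  have h₁ := ((continuous_const_add lm).continuousAt (x := u)).rpow_const (.inr hα')
  have h₂ := ((continuous_sub_left lp).continuousAt (x := u)).rpow_const (.inr hα')
  exact ((h₁.sub h₂).add continuousAt_const).div_const _

theorem hasDerivAt_cgfDeriv (hα : α ≠ 1) {u : ℝ} (hu : u ∈ Ioo (-lm) lp) :
    HasDerivAt (cgfDeriv α lp lm) (cgfDeriv2 α lp lm u) u := by
  have h₁ := ((hasDerivAt_id' u).const_sub lp).rpow_const (p := α - 1)
    (.inl (by linarith [hu.2]))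
  have h₂ := ((hasDerivAt_id' u).const_add lm).rpow_const (p := α - 1)
    (.inl (by linarith [hu.1]))
  refine (((h₂.sub h₁).add_const _).div_const _).congr_deriv ?_
  have : α - 1 ≠ 0 := sub_ne_zero.mpr hα
  rw [cgfDeriv2, show α - 1 - 1 = α - 2 by ring]
  field_simp
  ring

theorem deriv_deriv_exp_cgf (hα : 1 < α) {u : ℝ} (hu : u ∈ Ioo (-lm) lp) :
    deriv (deriv fun v => Real.exp (cgf α lp lm v)) u =
      Real.exp (cgf α lp lm u) * (cgfDeriv α lp lm u ^ 2 + cgfDeriv2 α lp lm u) :=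
  deriv_deriv_exp_comp (Eventually.of_forall (hasDerivAt_cgf hα))
    (hasDerivAt_cgfDeriv hα.ne' hu)

theorem rpow_mul_cgfDeriv2_sub {s : ℝ} (hs : 0 < s) :
    s ^ (2 - α) * cgfDeriv2 α lp lm (lp - s) =
      (1 + s ^ (2 - α) * (lm + (lp - s)) ^ (α - 2)) / (lp ^ (α - 2) + lm ^ (α - 2)) := by
  have hcancel : s ^ (2 - α) * s ^ (α - 2) = 1 := by
    rw [← Real.rpow_add hs]
    simp
  rw [cgfDeriv2, sub_sub_cancel, mul_div_assoc', mul_add, hcancel]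

theorem tendsto_rpow_mul_cgfDeriv2 (hα : α < 2) (hlplm : lp + lm ≠ 0) :
    Tendsto (fun s => s ^ (2 - α) * cgfDeriv2 α lp lm (lp - s)) (𝓝[>] 0)
      (𝓝 (1 / (lp ^ (α - 2) + lm ^ (α - 2)))) := by
  have hbounded : Tendsto (fun s : ℝ => (lm + (lp - s)) ^ (α - 2)) (𝓝[>] 0)
      (𝓝 ((lm + lp) ^ (α - 2))) :=
    (((continuous_const_add lm).tendsto lp).comp (tendsto_const_sub_nhdsGT_zero lp)).rpow_const
      (.inl (by rwa [add_comm]))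
  have h := ((tendsto_rpow_nhdsGT_zero (y := 2 - α) (by linarith)).mul hbounded).const_add 1
  rw [zero_mul, add_zero] at h
  exact (h.div_const _).congr' (eventually_mem_nhdsWithin.mono fun s hs =>
    (rpow_mul_cgfDeriv2_sub hs).symm)

end CTS

open CTS

/-- for α ∈ (1,2),
lim_{s→0⁺} s^{2−α}·M''_{CTS}(λ₊ − s) = M_{CTS}(λ₊)/(λ₊^{α−2}+λ₋^{α−2}). -/
theorem mgfCTS_second_deriv_tail (α lp lm : ℝ) (hα : α ∈ Set.Ioo (1:ℝ) 2)
    (hlp : 0 < lp) (hlm : 0 < lm)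
    (PhiH : ℝ → ℝ)
    (hPhiH : PhiH = fun u =>
      ((lp - u) ^ α - lp ^ α + (lm + u) ^ α - lm ^ α) /
        (α * (α - 1) * (lp ^ (α - 2) + lm ^ (α - 2))) +
      u * (lp ^ (α - 1) - lm ^ (α - 1)) / ((α - 1) * (lp ^ (α - 2) + lm ^ (α - 2))))
    (M : ℝ → ℝ) (hM : M = fun u => Real.exp (PhiH u)) :
    Tendsto (fun s : ℝ => s ^ (2 - α) * deriv (deriv M) (lp - s)) (𝓝[>] 0)
      (𝓝 (M lp / (lp ^ (α - 2) + lm ^ (α - 2)))) := by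
  obtain ⟨hα1, hα2⟩ := hα
  change PhiH = cgf α lp lm at hPhiH
  subst hPhiH hM
  have hmgf : Tendsto (fun s => Real.exp (cgf α lp lm (lp - s))) (𝓝[>] 0)
      (𝓝 (Real.exp (cgf α lp lm lp))) :=
    ((hasDerivAt_cgf hα1 lp).continuousAt.rexp.tendsto).comp (tendsto_const_sub_nhdsGT_zero lp)
  have hsq : Tendsto (fun s => s ^ (2 - α) * cgfDeriv α lp lm (lp - s) ^ 2) (𝓝[>] 0) (𝓝 0) := by
    simpa using (tendsto_rpow_nhdsGT_zero (by linarith)).mul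
      (((continuousAt_cgfDeriv hα1.le lp).tendsto.comp (tendsto_const_sub_nhdsGT_zero lp)).pow 2)
  have hlim := hmgf.mul (hsq.add (tendsto_rpow_mul_cgfDeriv2 (lm := lm) hα2 (by positivity)))
  rw [zero_add, mul_one_div] at hlim
  refine hlim.congr' ?_
  filter_upwards [Ioo_mem_nhdsGT (show (0 : ℝ) < lp + lm by positivity)] with s hs
  rw [deriv_deriv_exp_cgf hα1 ⟨by linarith [hs.2], by linarith [hs.1]⟩]
  ring
end
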